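/- arXiv:2310.13843 — 2 statements merged into one kernel-verified Lean document; each statement's English description precedes it below -/
import Mathlib

section
/- Conversely, when z ∈ {0,1}, the three relaxed inequalities imply the original switched constraint: if (W^R)² + (W^I)² ≤ W_ii·W_jj, (W^R)² + (W^I)² ≤ W_ii·W̄_jj·z, and (W^R)² + (W^I)² ≤ W̄_ii·W_jj·z hold with W_ii, W_jj ≥ 0, then (W^R)² + (W^I)² ≤ W_ii·W_jj·z. -/
theorem soc_cubic_relaxation_exact (WR WI Wii Wjj Wii_bar Wjj_bar z : ℝ)
    (hWii_bar : 0 < Wii_bar) (hWjj_bar : 0 < Wjj_bar)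
    (hWii : 0 ≤ Wii) (hWjj : 0 ≤ Wjj)
    (hz : z = 0 ∨ z = 1)
    (h1 : WR^2 + WI^2 ≤ Wii * Wjj)
    (h2 : WR^2 + WI^2 ≤ Wii * Wjj_bar * z)
    (h3 : WR^2 + WI^2 ≤ Wii_bar * Wjj * z) :
    WR^2 + WI^2 ≤ Wii * Wjj * z := by
  rcases hz with h | h <;> subst h <;> simp_all <;> nlinarith [sq_nonneg WR, sq_nonneg WI]
end

section
/- The SOC relaxation gives an upper bound: every feasible point of the AC-OPS problem maps to a feasible point of the SOC-OPS problem with the same objective value; hence the optimal value of SOC-OPS is at least that of AC-OPS. (It suffices to prove the single-line version: given V_i ∈ [V_min,i, V_max,i], V_j ∈ [V_min,j, V_max,j] with positive lower bounds, δ ∈ [θ_min, θ_max] ⊆ (−π/2, π/2), and z = 1, the lifted point W_ii = V_i², W_jj = V_j², W^Fr = V_i², W^To = V_j², W^R = V_iV_j cos δ, W^I = V_iV_j sin δ satisfies constraints (11)–(18): the voltage bounds, the linking inequalities, the W^R/W^I box bounds from Algorithm 1, the tangent angle constraints, and the three cone inequalities.) -/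
/-- Box bounds from Algorithm 1 for `W^R`. -/
noncomputable def WRbounds (Vmini Vmaxi Vminj Vmaxj θmin θmax : ℝ) : ℝ × ℝ :=
  if 0 ≤ θmin then
    (Vmini * Vminj * Real.cos θmax, Vmaxi * Vmaxj * Real.cos θmin)
  else if θmax ≤ 0 then
    (Vmini * Vminj * Real.cos θmin, Vmaxi * Vmaxj * Real.cos θmax)
  else
    (Vmini * Vminj * min (Real.cos θmin) (Real.cos θmax), Vmaxi * Vmaxj)

/-- Box bounds from Algorithm 1 for `W^I`. -/
noncomputable def WIbounds (Vmini Vmaxi Vminj Vmaxj θmin θmax : ℝ) : ℝ × ℝ :=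
  if 0 ≤ θmin then
    (Vmini * Vminj * Real.sin θmin, Vmaxi * Vmaxj * Real.sin θmax)
  else if θmax ≤ 0 then
    (Vmaxi * Vmaxj * Real.sin θmin, Vmini * Vminj * Real.sin θmax)
  else
    (Vmaxi * Vmaxj * Real.sin θmin, Vmaxi * Vmaxj * Real.sin θmax)

set_option maxHeartbeats 2000000 in
theorem ac_point_feasible_for_soc
    (Vi Vj δ θmin θmax Vmini Vmaxi Vminj Vmaxj : ℝ)
    (hVi1 : 0 < Vmini) (hVi2 : Vmini ≤ Vi) (hVi3 : Vi ≤ Vmaxi)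
    (hVj1 : 0 < Vminj) (hVj2 : Vminj ≤ Vj) (hVj3 : Vj ≤ Vmaxj)
    (hθlo : -(Real.pi / 2) < θmin) (hθ1 : θmin ≤ δ) (hθ2 : δ ≤ θmax)
    (hθhi : θmax < Real.pi / 2) :
    let z : ℝ := 1
    let Wii := Vi^2
    let Wjj := Vj^2
    let WFr := Vi^2
    let WTo := Vj^2
    let WR := Vi * Vj * Real.cos δ
    let WI := Vi * Vj * Real.sin δ
    -- (11) bus voltage bounds
    (z * Vmini^2 ≤ Wii ∧ Wii ≤ z * Vmaxi^2) ∧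
    (z * Vminj^2 ≤ Wjj ∧ Wjj ≤ z * Vmaxj^2) ∧
    -- (12) from/to voltage bounds
    (z * Vmini^2 ≤ WFr ∧ WFr ≤ z * Vmaxi^2) ∧
    (z * Vminj^2 ≤ WTo ∧ WTo ≤ z * Vmaxj^2) ∧
    -- (13) linking inequalities
    (WFr ≤ Wii ∧ Wii - Vmaxi^2 * (1 - z) ≤ WFr) ∧
    (WTo ≤ Wjj ∧ Wjj - Vmaxj^2 * (1 - z) ≤ WTo) ∧
    -- (14) box bounds on W^R, W^I from Algorithm 1
    (z * (WRbounds Vmini Vmaxi Vminj Vmaxj θmin θmax).1 ≤ WR ∧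
      WR ≤ z * (WRbounds Vmini Vmaxi Vminj Vmaxj θmin θmax).2) ∧
    (z * (WIbounds Vmini Vmaxi Vminj Vmaxj θmin θmax).1 ≤ WI ∧
      WI ≤ z * (WIbounds Vmini Vmaxi Vminj Vmaxj θmin θmax).2) ∧
    -- (15) tangent angle constraints
    (Real.tan θmin * WR ≤ WI ∧ WI ≤ Real.tan θmax * WR) ∧
    -- (18) cone inequalities
    (WR^2 + WI^2 ≤ Wii * Wjj) ∧
    (WR^2 + WI^2 ≤ Wii * Vmaxj^2 * z) ∧
    (WR^2 + WI^2 ≤ Vmaxi^2 * Wjj * z) := by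
  intro z Wii Wjj WFr WTo WR WI
  simp only [z, Wii, Wjj, WFr, WTo, WR, WI]
  have hVi0 : (0:ℝ) < Vi := hVi1.trans_le hVi2
  have hVj0 : (0:ℝ) < Vj := hVj1.trans_le hVj2
  have hVmaxi : 0 < Vmaxi := hVi0.trans_le hVi3
  have hVmaxj : 0 < Vmaxj := hVj0.trans_le hVj3
  have hδlo : -(Real.pi / 2) < δ := hθlo.trans_le hθ1
  have hδhi : δ < Real.pi / 2 := hθ2.trans_lt hθhi
  have hcδ : 0 < Real.cos δ := Real.cos_pos_of_mem_Ioo ⟨hδlo, hδhi⟩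
  have hcmin : 0 < Real.cos θmin :=
    Real.cos_pos_of_mem_Ioo ⟨hθlo, hθ1.trans_lt hδhi⟩
  have hcmax : 0 < Real.cos θmax :=
    Real.cos_pos_of_mem_Ioo ⟨hδlo.trans_le hθ2, hθhi⟩
  have hcδ1 : Real.cos δ ≤ 1 := Real.cos_le_one δ
  have hpi : (0:ℝ) < Real.pi := Real.pi_pos
  have hsin1 : Real.sin θmin ≤ Real.sin δ :=
    Real.sin_le_sin_of_le_of_le_pi_div_two hθlo.le hδhi.le hθ1
  have hsin2 : Real.sin δ ≤ Real.sin θmax :=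
    Real.sin_le_sin_of_le_of_le_pi_div_two hδlo.le hθhi.le hθ2
  have hVVij : Vi * Vj ≤ Vmaxi * Vmaxj :=
    mul_le_mul hVi3 hVj3 hVj0.le hVmaxi.le
  have hVVij' : Vmini * Vminj ≤ Vi * Vj :=
    mul_le_mul hVi2 hVj2 hVj1.le hVi0.le
  have hVisq : Vi ^ 2 ≤ Vmaxi ^ 2 := by nlinarith
  have hVjsq : Vj ^ 2 ≤ Vmaxj ^ 2 := by nlinarith
  have hVV0 : (0:ℝ) ≤ Vi * Vj := by positivity
  have hpyth : (Vi * Vj * Real.cos δ) ^ 2 + (Vi * Vj * Real.sin δ) ^ 2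
      = Vi ^ 2 * Vj ^ 2 := by
    have := Real.sin_sq_add_cos_sq δ
    nlinarith [this]
  refine ⟨⟨by nlinarith, by nlinarith⟩, ⟨by nlinarith, by nlinarith⟩,
    ⟨by nlinarith, by nlinarith⟩, ⟨by nlinarith, by nlinarith⟩,
    ⟨le_refl _, by nlinarith⟩, ⟨le_refl _, by nlinarith⟩, ?_, ?_, ⟨?_, ?_⟩,
    by nlinarith, by nlinarith [mul_le_mul_of_nonneg_left hVjsq (sq_nonneg Vi)],
    by nlinarith [mul_le_mul_of_nonneg_right hVisq (sq_nonneg Vj)]⟩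
  · -- WR bounds
    show 1 * (WRbounds Vmini Vmaxi Vminj Vmaxj θmin θmax).1 ≤ Vi * Vj * Real.cos δ ∧
      Vi * Vj * Real.cos δ ≤ 1 * (WRbounds Vmini Vmaxi Vminj Vmaxj θmin θmax).2
    unfold WRbounds
    split_ifs with h1 h2
    · have hc1 : Real.cos θmax ≤ Real.cos δ :=
        Real.cos_le_cos_of_nonneg_of_le_pi (h1.trans hθ1) (by linarith) hθ2
      have hc2 : Real.cos δ ≤ Real.cos θmin :=
        Real.cos_le_cos_of_nonneg_of_le_pi h1 (by linarith) hθ1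
      constructor
      · simp only [one_mul]
        calc Vmini * Vminj * Real.cos θmax ≤ Vi * Vj * Real.cos θmax :=
              mul_le_mul_of_nonneg_right hVVij' hcmax.le
          _ ≤ Vi * Vj * Real.cos δ := mul_le_mul_of_nonneg_left hc1 hVV0
      · simp only [one_mul]
        calc Vi * Vj * Real.cos δ ≤ Vi * Vj * Real.cos θmin :=
              mul_le_mul_of_nonneg_left hc2 hVV0
          _ ≤ Vmaxi * Vmaxj * Real.cos θmin :=
              mul_le_mul_of_nonneg_right hVVij hcmin.le
    · have h1 : Real.cos (-θmin) ≤ Real.cos (-δ) :=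
        Real.cos_le_cos_of_nonneg_of_le_pi (by linarith) (by linarith) (by linarith)
      have h2 : Real.cos (-δ) ≤ Real.cos (-θmax) :=
        Real.cos_le_cos_of_nonneg_of_le_pi (by linarith) (by linarith) (by linarith)
      rw [Real.cos_neg, Real.cos_neg] at h1 h2
      constructor
      · simp only [one_mul]
        calc Vmini * Vminj * Real.cos θmin ≤ Vi * Vj * Real.cos θmin :=
              mul_le_mul_of_nonneg_right hVVij' hcmin.le
          _ ≤ Vi * Vj * Real.cos δ := mul_le_mul_of_nonneg_left h1 hVV0
      · simp only [one_mul]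
        calc Vi * Vj * Real.cos δ ≤ Vi * Vj * Real.cos θmax :=
              mul_le_mul_of_nonneg_left h2 hVV0
          _ ≤ Vmaxi * Vmaxj * Real.cos θmax :=
              mul_le_mul_of_nonneg_right hVVij hcmax.le
    · have hmin : min (Real.cos θmin) (Real.cos θmax) ≤ Real.cos δ := by
        rcases le_or_gt δ 0 with hδ | hδ
        · refine (min_le_left _ _).trans ?_
          have := Real.cos_le_cos_of_nonneg_of_le_pi (x := -δ) (y := -θmin)
            (by linarith) (by linarith) (by linarith)
          rwa [Real.cos_neg, Real.cos_neg] at this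
        · exact (min_le_right _ _).trans
            (Real.cos_le_cos_of_nonneg_of_le_pi hδ.le (by linarith) hθ2)
      have hmin0 : 0 ≤ min (Real.cos θmin) (Real.cos θmax) :=
        le_min hcmin.le hcmax.le
      constructor
      · simp only [one_mul]
        calc Vmini * Vminj * min (Real.cos θmin) (Real.cos θmax)
            ≤ Vi * Vj * min (Real.cos θmin) (Real.cos θmax) :=
              mul_le_mul_of_nonneg_right hVVij' hmin0
          _ ≤ Vi * Vj * Real.cos δ := mul_le_mul_of_nonneg_left hmin hVV0
      · simp only [one_mul]
        nlinarith [mul_le_mul_of_nonneg_left hcδ1 hVV0]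
  · -- WI bounds
    show 1 * (WIbounds Vmini Vmaxi Vminj Vmaxj θmin θmax).1 ≤ Vi * Vj * Real.sin δ ∧
      Vi * Vj * Real.sin δ ≤ 1 * (WIbounds Vmini Vmaxi Vminj Vmaxj θmin θmax).2
    unfold WIbounds
    split_ifs with h1 h2
    · have hs0 : 0 ≤ Real.sin θmin := Real.sin_nonneg_of_nonneg_of_le_pi h1 (by linarith)
      constructor
      · simp only [one_mul]
        calc Vmini * Vminj * Real.sin θmin ≤ Vi * Vj * Real.sin θmin :=
              mul_le_mul_of_nonneg_right hVVij' hs0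
          _ ≤ Vi * Vj * Real.sin δ := mul_le_mul_of_nonneg_left hsin1 hVV0
      · simp only [one_mul]
        have hsmax : 0 ≤ Real.sin θmax := le_trans hs0 (hsin1.trans hsin2)
        calc Vi * Vj * Real.sin δ ≤ Vi * Vj * Real.sin θmax :=
              mul_le_mul_of_nonneg_left hsin2 hVV0
          _ ≤ Vmaxi * Vmaxj * Real.sin θmax :=
              mul_le_mul_of_nonneg_right hVVij hsmax
    · have hsmax : Real.sin θmax ≤ 0 :=
        Real.sin_nonpos_of_nonpos_of_neg_pi_le h2 (by linarith)
      have hsmin : Real.sin θmin ≤ 0 := le_trans (hsin1.trans hsin2) hsmax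
      constructor
      · simp only [one_mul]
        calc Vmaxi * Vmaxj * Real.sin θmin ≤ Vi * Vj * Real.sin θmin :=
              mul_le_mul_of_nonpos_right hVVij hsmin
          _ ≤ Vi * Vj * Real.sin δ := mul_le_mul_of_nonneg_left hsin1 hVV0
      · simp only [one_mul]
        have hsδ : Real.sin δ ≤ 0 := hsin2.trans hsmax
        calc Vi * Vj * Real.sin δ ≤ Vmini * Vminj * Real.sin δ :=
              mul_le_mul_of_nonpos_right hVVij' hsδ
          _ ≤ Vmini * Vminj * Real.sin θmax :=
              mul_le_mul_of_nonneg_left hsin2 (by positivity)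
    · have hsmin : Real.sin θmin ≤ 0 :=
        Real.sin_nonpos_of_nonpos_of_neg_pi_le (by linarith) (by linarith)
      have hsmax : 0 ≤ Real.sin θmax :=
        Real.sin_nonneg_of_nonneg_of_le_pi (by linarith) (by linarith)
      constructor
      · simp only [one_mul]
        calc Vmaxi * Vmaxj * Real.sin θmin ≤ Vi * Vj * Real.sin θmin :=
              mul_le_mul_of_nonpos_right hVVij hsmin
          _ ≤ Vi * Vj * Real.sin δ := mul_le_mul_of_nonneg_left hsin1 hVV0
      · simp only [one_mul]
        calc Vi * Vj * Real.sin δ ≤ Vi * Vj * Real.sin θmax :=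
              mul_le_mul_of_nonneg_left hsin2 hVV0
          _ ≤ Vmaxi * Vmaxj * Real.sin θmax :=
              mul_le_mul_of_nonneg_right hVVij hsmax
  · -- tan θmin
    show Real.tan θmin * (Vi * Vj * Real.cos δ) ≤ Vi * Vj * Real.sin δ
    rw [Real.tan_eq_sin_div_cos, div_mul_eq_mul_div, div_le_iff₀ hcmin]
    have hs : Real.sin (θmin - δ) ≤ 0 :=
      Real.sin_nonpos_of_nonpos_of_neg_pi_le (by linarith) (by linarith)
    rw [Real.sin_sub] at hs
    nlinarith [mul_le_mul_of_nonneg_left hs hVV0]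
  · -- tan θmax
    show Vi * Vj * Real.sin δ ≤ Real.tan θmax * (Vi * Vj * Real.cos δ)
    rw [Real.tan_eq_sin_div_cos, div_mul_eq_mul_div, le_div_iff₀ hcmax]
    have hs : 0 ≤ Real.sin (θmax - δ) :=
      Real.sin_nonneg_of_nonneg_of_le_pi (by linarith) (by linarith)
    rw [Real.sin_sub] at hs
    nlinarith [mul_le_mul_of_nonneg_left hs hVV0]
end
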